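/- Let (X,Y) be a pair of square-integrable real random variables and let (X_1,Y_1),...,(X_{n+m}) be such that (X_i,Y_i), i=1..n are i.i.d. copies of (X,Y) and Y_{n+1},...,Y_{n+m} are further i.i.d. copies of Y, all n+m samples mutually independent across indices. For α ∈ ℝ define the multi-fidelity estimator μ̂ = (1/n)∑_{i=1}^n X_i + α((1/(n+m))∑_{i=1}^{n+m} Y_i − (1/n)∑_{i=1}^n Y_i). Then Var(μ̂) = Var(X)/n − 2α m Cov(X,Y)/(n(n+m)) + α² m Var(Y)/(n(n+m)). -/

import Mathlib

open MeasureTheory ProbabilityTheory Real Finset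

/-- Covariance of two real random variables. -/
noncomputable def cov {Ω : Type*} [MeasurableSpace Ω] (X Y : Ω → ℝ) (μ : Measure Ω) : ℝ :=
  ∫ ω, (X ω - ∫ x, X x ∂μ) * (Y ω - ∫ x, Y x ∂μ) ∂μ

/-- The multi-fidelity Monte Carlo estimator. -/
noncomputable def mfEst {Ω : Type*} (n m : ℕ) (Xs Ys : ℕ → Ω → ℝ) (α : ℝ) : Ω → ℝ :=
  fun ω => (∑ i ∈ range n, Xs i ω) / n
    + α * ((∑ i ∈ range (n + m), Ys i ω) / (n + m) - (∑ i ∈ range n, Ys i ω) / n)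

/-!
Write `μ̂` as `∑ i < n + m, φᵢ (Xᵢ, Yᵢ)` with fixed linear maps `φᵢ = mfTerm n m α i`:
`φᵢ (x, y) = x / n + α (1 / (n + m) - 1 / n) y` for `i < n` and `φᵢ (x, y) = α y / (n + m)`
for `i ≥ n`. The summands are independent, so `Var μ̂` is the sum of their variances, and each
summand is distributed like `φᵢ (X, Y)`. This gives `n` copies of
`Var (X / n + α (1 / (n + m) - 1 / n) Y)` plus `m` copies of `Var (α Y / (n + m))`, and
expanding these through the covariance gives the formula.
-/

section

variable {Ω : Type*} [MeasurableSpace Ω] {μ : Measure Ω}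

lemma variance_const_mul_add_const_mul [IsFiniteMeasure μ] {X Y : Ω → ℝ}
    (hX : MemLp X 2 μ) (hY : MemLp Y 2 μ) (a b : ℝ) :
    variance (fun ω => a * X ω + b * Y ω) μ
      = a ^ 2 * variance X μ + 2 * a * b * covariance X Y μ + b ^ 2 * variance Y μ := by
  rw [variance_fun_add (hX.const_mul a) (hY.const_mul b), variance_const_mul, variance_const_mul,
    covariance_const_mul_left, covariance_const_mul_right]
  ring

lemma iIndepFun.variance_sum {ι : Type*} [Fintype ι] {Z : ι → Ω → ℝ}
    (hindep : iIndepFun Z μ) (hZ : ∀ i, MemLp (Z i) 2 μ) :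
    variance (∑ i, Z i) μ = ∑ i, variance (Z i) μ :=
  IndepFun.variance_sum (fun i _ => hZ i) fun _ _ _ _ hij => hindep.indepFun hij

end

noncomputable def mfTerm (n m : ℕ) (α : ℝ) (i : ℕ) : ℝ × ℝ → ℝ :=
  if i < n then fun p => (n : ℝ)⁻¹ * p.1 + (α / (n + m) - α / n) * p.2
  else fun p => α / (n + m) * p.2

lemma measurable_mfTerm (n m : ℕ) (α : ℝ) (i : ℕ) : Measurable (mfTerm n m α i) := by
  unfold mfTerm
  split <;> fun_prop

lemma mfTerm_of_lt {n m : ℕ} {α : ℝ} {i : ℕ} (h : i < n) (p : ℝ × ℝ) :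
    mfTerm n m α i p = (n : ℝ)⁻¹ * p.1 + (α / (n + m) - α / n) * p.2 := by
  simp [mfTerm, h]

lemma mfTerm_of_le {n m : ℕ} {α : ℝ} {i : ℕ} (h : n ≤ i) (p : ℝ × ℝ) :
    mfTerm n m α i p = α / (n + m) * p.2 := by
  simp [mfTerm, h.not_gt]

lemma mfEst_eq_sum {Ω : Type*} (n m : ℕ) (Xs Ys : ℕ → Ω → ℝ) (α : ℝ) :
    mfEst n m Xs Ys α = ∑ i : Fin (n + m), mfTerm n m α i ∘ fun ω => (Xs i ω, Ys i ω) := by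
  funext ω
  simp only [Finset.sum_apply, Function.comp_apply]
  rw [Fin.sum_univ_eq_sum_range (fun i => mfTerm n m α i (Xs i ω, Ys i ω)), Finset.sum_range_add,
    Finset.sum_congr rfl fun i hi => mfTerm_of_lt (mem_range.1 hi) _,
    Finset.sum_congr rfl fun i _ => mfTerm_of_le (Nat.le_add_right n i) _,
    mfEst, Finset.sum_range_add (fun i => Ys i ω)]
  simp only [Finset.sum_add_distrib, ← Finset.mul_sum]
  ring

section

variable {Ω : Type*} [MeasurableSpace Ω] {μ : Measure Ω} {n m : ℕ} {α : ℝ} {X Y : Ω → ℝ}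

lemma memLp_mfTerm_comp (hX : MemLp X 2 μ) (hY : MemLp Y 2 μ) (i : ℕ) :
    MemLp (mfTerm n m α i ∘ fun ω => (X ω, Y ω)) 2 μ := by
  rcases lt_or_ge i n with h | h
  · simp only [Function.comp_def, mfTerm_of_lt h]
    exact (hX.const_mul _).add (hY.const_mul _)
  · simp only [Function.comp_def, mfTerm_of_le h]
    exact hY.const_mul _

lemma identDistrib_mfTerm_comp {Ω' : Type*} [MeasurableSpace Ω'] {μ' : Measure Ω'}
    {X' Y' : Ω' → ℝ} {i : ℕ}
    (hpair : i < n → IdentDistrib (fun ω => (X' ω, Y' ω)) (fun ω => (X ω, Y ω)) μ' μ)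
    (hsnd : IdentDistrib Y' Y μ' μ) :
    IdentDistrib (mfTerm n m α i ∘ fun ω => (X' ω, Y' ω))
      (mfTerm n m α i ∘ fun ω => (X ω, Y ω)) μ' μ := by
  rcases lt_or_ge i n with h | h
  · exact (hpair h).comp (measurable_mfTerm n m α i)
  · have hsnd_only : mfTerm n m α i = (fun y => α / (n + m) * y) ∘ Prod.snd :=
      funext (mfTerm_of_le h)
    rw [hsnd_only]
    exact hsnd.comp (by fun_prop)

lemma sum_variance_mfTerm_comp [IsFiniteMeasure μ] (hn : n ≠ 0) (hX : MemLp X 2 μ)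
    (hY : MemLp Y 2 μ) :
    ∑ i : Fin (n + m), variance (mfTerm n m α i ∘ fun ω => (X ω, Y ω)) μ
      = variance X μ / n - 2 * α * m * covariance X Y μ / (n * (n + m))
          + α ^ 2 * m * variance Y μ / (n * (n + m)) := by
  rw [Fin.sum_univ_add]
  simp only [Function.comp_def, Fin.val_castAdd, Fin.val_natAdd, mfTerm_of_lt (Fin.is_lt _),
    mfTerm_of_le (Nat.le_add_right n _), variance_const_mul_add_const_mul hX hY,
    variance_const_mul, Finset.sum_const, Finset.card_univ, Fintype.card_fin, nsmul_eq_mul]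
  field_simp
  ring

end

theorem mfmc_variance_general {Ω : Type*} [MeasurableSpace Ω] (μ : Measure Ω) [IsProbabilityMeasure μ]
    (n m : ℕ) (hn : 0 < n)
    (X Y : Ω → ℝ) (Xs Ys : ℕ → Ω → ℝ)
    (hXs : ∀ i, Measurable (Xs i)) (hYs : ∀ i, Measurable (Ys i))
    (hX2 : MemLp X 2 μ) (hY2 : MemLp Y 2 μ)
    (hpair : ∀ i < n, Measure.map (fun ω => (Xs i ω, Ys i ω)) μ
        = Measure.map (fun ω => (X ω, Y ω)) μ)
    (hYlaw : ∀ i < n + m, Measure.map (Ys i) μ = Measure.map Y μ)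
    (hindep : iIndepFun
        (fun i : Fin (n + m) => fun ω => (Xs i ω, Ys i ω)) μ)
    (α : ℝ) :
    variance (mfEst n m Xs Ys α) μ
      = variance X μ / n - 2 * α * m * cov X Y μ / (n * (n + m))
          + α ^ 2 * m * variance Y μ / (n * (n + m)) := by
  have hident : ∀ i : Fin (n + m), IdentDistrib (mfTerm n m α i ∘ fun ω => (Xs i ω, Ys i ω))
      (mfTerm n m α i ∘ fun ω => (X ω, Y ω)) μ μ := fun i =>
    identDistrib_mfTerm_comp
      (fun h => ⟨((hXs i).prodMk (hYs i)).aemeasurable,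
        hX2.aemeasurable.prodMk hY2.aemeasurable, hpair i h⟩)
      ⟨(hYs i).aemeasurable, hY2.aemeasurable, hYlaw i i.is_lt⟩
  rw [mfEst_eq_sum, iIndepFun.variance_sum (hindep.comp _ fun i => measurable_mfTerm n m α i)
      fun i => (hident i).memLp_iff.2 (memLp_mfTerm_comp hX2 hY2 i),
    Finset.sum_congr rfl fun i _ => (hident i).variance_eq]
  -- `cov X Y μ` is definitionally `covariance X Y μ`
  exact sum_variance_mfTerm_comp hn.ne' hX2 hY2

theorem mfmc_variance {Ω : Type*} [MeasurableSpace Ω] (μ : Measure Ω) [IsProbabilityMeasure μ]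
    (n m : ℕ) (hn : 0 < n) (hm : 0 < m)
    (X Y : Ω → ℝ) (Xs Ys : ℕ → Ω → ℝ)
    (hX : Measurable X) (hY : Measurable Y)
    (hXs : ∀ i, Measurable (Xs i)) (hYs : ∀ i, Measurable (Ys i))
    (hX2 : MemLp X 2 μ) (hY2 : MemLp Y 2 μ)
    (hpair : ∀ i < n, Measure.map (fun ω => (Xs i ω, Ys i ω)) μ
        = Measure.map (fun ω => (X ω, Y ω)) μ)
    (hYlaw : ∀ i < n + m, Measure.map (Ys i) μ = Measure.map Y μ)
    (hindep : iIndepFun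
        (fun i : Fin (n + m) => fun ω => (Xs i ω, Ys i ω)) μ)
    (α : ℝ) :
    variance (mfEst n m Xs Ys α) μ
      = variance X μ / n - 2 * α * m * cov X Y μ / (n * (n + m))
          + α ^ 2 * m * variance Y μ / (n * (n + m)) :=
  mfmc_variance_general μ n m hn X Y Xs Ys hXs hYs hX2 hY2 hpair hYlaw hindep α
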